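/- Let κ be an uncountable cardinal and let 𝒰 be a κ-complete nonprincipal ultrafilter on κ (closed under intersections of fewer than κ of its members, but not assumed normal). Then every set in Σ([κ]^{<ω}, 𝒫(κ) − 𝒰) is Ramsey, i.e., for every such set there is a homogeneous H ∈ [κ]^κ. -/

import Mathlib

open Set Cardinal

universe u

/-- `[κ]^κ`: the subsets of `κ` (viewed as the set of ordinals `< κ`) of cardinality `κ`
(equivalently, of order type `κ`). -/
def bigSets (κ : Cardinal.{0}) : Set (Set Ordinal.{0}) :=
  {X | X ⊆ Set.Iio κ.ord ∧ #X = Cardinal.lift.{1} κ}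

/-- `[H]^κ`: the subsets of `H` of cardinality `κ`. -/
def subBig (κ : Cardinal.{0}) (H : Set Ordinal.{0}) : Set (Set Ordinal.{0}) :=
  {X | X ⊆ H ∧ #X = Cardinal.lift.{1} κ}

/-- `X` matches the pattern `(A,B)`: `A ⊆ X` and `B ∩ X = ∅`. -/
def Matches (X A B : Set Ordinal.{0}) : Prop :=
  A ⊆ X ∧ B ∩ X = ∅

/-- `[A;B]`: the members of `[κ]^κ` matching the pattern `(A,B)`. -/
def patternSet (κ : Cardinal.{0}) (A B : Set Ordinal.{0}) : Set (Set Ordinal.{0}) :=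
  {X ∈ bigSets κ | Matches X A B}

/-- `Σ(𝒜,ℬ)`: the subsets of `[κ]^κ` which are unions of sets `[A;B]` with
`A ∈ 𝒜`, `B ∈ ℬ`, `A ∩ B = ∅`. -/
def SigmaFam (κ : Cardinal.{0}) (𝒜 ℬ : Set (Set Ordinal.{0})) : Set (Set (Set Ordinal.{0})) :=
  {S | ∃ Q : Set (Set Ordinal.{0} × Set Ordinal.{0}),
    (∀ p ∈ Q, p.1 ∈ 𝒜 ∧ p.2 ∈ ℬ ∧ Disjoint p.1 p.2) ∧
    S = {X ∈ bigSets κ | ∃ p ∈ Q, Matches X p.1 p.2}}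

/-- `Δ(𝒜,ℬ)`: those `S` with both `S` and `[κ]^κ \ S` in `Σ(𝒜,ℬ)`. -/
def DeltaFam (κ : Cardinal.{0}) (𝒜 ℬ : Set (Set Ordinal.{0})) : Set (Set (Set Ordinal.{0})) :=
  {S | S ∈ SigmaFam κ 𝒜 ℬ ∧ bigSets κ \ S ∈ SigmaFam κ 𝒜 ℬ}

/-- `[κ]^{<γ}`: subsets of `κ` of cardinality `< γ`. -/
def smallSets (κ γ : Cardinal.{0}) : Set (Set Ordinal.{0}) :=
  {A | A ⊆ Set.Iio κ.ord ∧ #A < Cardinal.lift.{1} γ}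

/-- `[κ]^n`: `n`-element subsets of `κ`. -/
def nSets (κ : Cardinal.{0}) (n : ℕ) : Set (Set Ordinal.{0}) :=
  {A | A ⊆ Set.Iio κ.ord ∧ #A = n}

/-- `[κ]^{<ω}`: finite subsets of `κ`. -/
def finSets (κ : Cardinal.{0}) : Set (Set Ordinal.{0}) :=
  {A | A ⊆ Set.Iio κ.ord ∧ A.Finite}

/-- `[κ]^ω`: subsets of `κ` of order type `ω`. -/
def omegaSets (κ : Cardinal.{0}) : Set (Set Ordinal.{0}) :=
  {A | A ⊆ Set.Iio κ.ord ∧ A.Infinite ∧ ∀ a ∈ A, (A ∩ Set.Iio a).Finite}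

/-- `S ⊆ [κ]^κ` is Ramsey: some `H ∈ [κ]^κ` is homogeneous for `S`. -/
def IsRamsey (κ : Cardinal.{0}) (S : Set (Set Ordinal.{0})) : Prop :=
  ∃ H ∈ bigSets κ, subBig κ H ⊆ S ∨ subBig κ H ∩ S = ∅
/-- `U` is a `κ`-complete nonprincipal ultrafilter on `κ` (viewed as the set of
ordinals `< κ`): a proper, upward-closed (within `𝒫(κ)`) family containing `κ`,
deciding every subset of `κ`, containing no singleton, and closed under
intersections of fewer than `κ` of its members. -/
def IsKCUltrafilter (κ : Cardinal.{0}) (U : Set (Set Ordinal.{0})) : Prop :=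
  (∀ Y ∈ U, Y ⊆ Set.Iio κ.ord) ∧
  Set.Iio κ.ord ∈ U ∧
  (∅ : Set Ordinal.{0}) ∉ U ∧
  (∀ Y Z : Set Ordinal.{0}, Y ∈ U → Y ⊆ Z → Z ⊆ Set.Iio κ.ord → Z ∈ U) ∧
  (∀ Y ⊆ Set.Iio κ.ord, Y ∈ U ∨ Set.Iio κ.ord \ Y ∈ U) ∧
  (∀ α : Ordinal.{0}, {α} ∉ U) ∧
  (∀ (I : Set Ordinal.{0}) (Y : Ordinal.{0} → Set Ordinal.{0}),
    I.Nonempty → #I < Cardinal.lift.{1} κ → (∀ i ∈ I, Y i ∈ U) → (⋂ i ∈ I, Y i) ∈ U)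

/-- `U` is a normal ultrafilter on `κ`: a `κ`-complete nonprincipal ultrafilter
on `κ` closed under diagonal intersections. -/
def IsNormalUltrafilter (κ : Cardinal.{0}) (U : Set (Set Ordinal.{0})) : Prop :=
  IsKCUltrafilter κ U ∧
  ∀ Y : Ordinal.{0} → Set Ordinal.{0}, (∀ α < κ.ord, Y α ∈ U) →
    {β | β < κ.ord ∧ ∀ α < β, β ∈ Y α} ∈ U

/-!
Call a finite `a ⊆ κ` secured if it matches a pattern of `Q`, or if for `U`-almost all `β`
above `a` the set `a ∪ {β}` is secured of smaller rank. Each finite `a` gets a set in `U`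
steering the next point of `H`: avoid the negative part of a pattern matched by `a`, lower the
rank of a secured `a`, keep an unsecured `a` unsecured. By `κ`-completeness there is an
increasing `κ`-sequence `H` each of whose terms is steered by every finite set of earlier terms.
If `∅` is secured, an infinite `X ⊆ H` descends through the ranks, each time adding the least
missing element of `X`, to a finite subset matching a pattern, which `X` then also matches.
If `∅` is not secured, no finite subset of `H` is, so no subset of `H` matches a pattern.
-/

theorem Cardinal.mk_finite_subsets_lt {α : Type u} {F : Set α} {c : Cardinal.{u}} (hc : ℵ₀ ≤ c)
    (hF : #F < c) : #{a : Set α | a ⊆ F ∧ a.Finite} < c := by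
  classical
  by_cases hfin : F.Finite
  · exact ((hfin.finite_subsets.subset fun a ha => ha.1).lt_aleph0).trans_le hc
  have hrange : {a : Set α | a ⊆ F ∧ a.Finite} =
      range fun s : Finset F => Subtype.val '' (s : Set F) := by
    ext a
    refine ⟨fun ⟨haF, ha⟩ => ?_, ?_⟩
    · refine ⟨(ha.preimage Subtype.val_injective.injOn).toFinset, ?_⟩
      simpa using haF
    · rintro ⟨s, rfl⟩
      exact ⟨by simp, s.finite_toSet.image _⟩
  rw [hrange]
  calc #(range fun s : Finset F => Subtype.val '' (s : Set F)) ≤ #(Finset F) := mk_range_le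
    _ ≤ #(List F) := mk_le_of_surjective List.toFinset_surjective
    _ ≤ max ℵ₀ #F := mk_list_le_max F
    _ = #F := max_eq_right (infinite_iff.1 (infinite_coe_iff.2 hfin))
    _ < c := hF

namespace IsKCUltrafilter

variable {κ : Cardinal.{0}} {U : Set (Set Ordinal.{0})}

theorem nonempty_of_mem (hU : IsKCUltrafilter κ U) {Y : Set Ordinal.{0}} (hY : Y ∈ U) :
    Y.Nonempty :=
  nonempty_iff_ne_empty.2 fun h => hU.2.2.1 (h ▸ hY)

theorem mem_of_superset (hU : IsKCUltrafilter κ U) {Y Z : Set Ordinal.{0}} (hY : Y ∈ U)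
    (hYZ : Y ⊆ Z) (hZ : Z ⊆ Iio κ.ord) : Z ∈ U :=
  hU.2.2.2.1 Y Z hY hYZ hZ

theorem singleton_notMem (hU : IsKCUltrafilter κ U) (α : Ordinal.{0}) : {α} ∉ U :=
  hU.2.2.2.2.2.1 α

theorem diff_mem_of_notMem (hU : IsKCUltrafilter κ U) {Y : Set Ordinal.{0}}
    (hY : Y ⊆ Iio κ.ord) (h : Y ∉ U) : Iio κ.ord \ Y ∈ U :=
  (hU.2.2.2.2.1 Y hY).resolve_left h

theorem inter_sInter_mem (hU : IsKCUltrafilter κ U) {𝒮 : Set (Set Ordinal.{0})}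
    (h𝒮 : #𝒮 < lift.{1} κ) (hmem : ∀ Y ∈ 𝒮, Y ∈ U) : Iio κ.ord ∩ ⋂₀ 𝒮 ∈ U := by
  obtain ⟨hsub, htop, -, -, -, -, hcomplete⟩ := hU
  rcases 𝒮.eq_empty_or_nonempty with rfl | ⟨Y₀, hY₀⟩
  · simpa using htop
  have hle : #𝒮 ≤ #(Iio κ.ord) := by rw [mk_Iio_ordinal, card_ord]; exact h𝒮.le
  obtain ⟨e⟩ := le_def _ _ |>.1 hle
  have : Nonempty 𝒮 := ⟨⟨Y₀, hY₀⟩⟩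
  set g : 𝒮 → Ordinal.{0} := fun Y => e Y
  have hg : g.Injective := Subtype.val_injective.comp e.injective
  have hinter := hcomplete (range g) (fun i => ((Function.invFun g i : 𝒮) : Set Ordinal.{0}))
    (range_nonempty g) (by rwa [mk_range_eq g hg])
    (by rintro _ ⟨Y, rfl⟩; simpa [Function.leftInverse_invFun hg Y] using hmem Y Y.2)
  simp only [biInter_range, Function.leftInverse_invFun hg _] at hinter
  rwa [inter_eq_right.2 ((sInter_subset_of_mem hY₀).trans (hsub Y₀ (hmem Y₀ hY₀))),
    sInter_eq_iInter]

theorem diff_mem_of_mk_lt (hU : IsKCUltrafilter κ U) {s : Set Ordinal.{0}}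
    (hs : s ⊆ Iio κ.ord) (hsκ : #s < lift.{1} κ) : Iio κ.ord \ s ∈ U := by
  have hmem : ∀ α ∈ s, Iio κ.ord \ {α} ∈ U := fun α hα =>
    hU.diff_mem_of_notMem (singleton_subset_iff.2 (hs hα)) (hU.singleton_notMem α)
  convert hU.inter_sInter_mem (mk_image_le.trans_lt hsκ) (forall_mem_image.2 hmem) using 1
  ext β
  simp only [mem_sdiff, mem_inter_iff, mem_sInter, forall_mem_image, mem_singleton_iff]
  grind

theorem Ioo_mem (hU : IsKCUltrafilter κ U) (hκ : ℵ₀ ≤ κ) {γ : Ordinal.{0}} (hγ : γ < κ.ord) :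
    Ioo γ κ.ord ∈ U := by
  have hsmall : #(Iic γ) < lift.{1} κ := by
    rw [← Order.Iio_succ, mk_Iio_ordinal, lift_lt, ← lt_ord]
    exact (isSuccLimit_ord hκ).succ_lt hγ
  have h := hU.diff_mem_of_mk_lt (s := Iic γ) (fun β hβ => lt_of_le_of_lt hβ hγ) hsmall
  rwa [Iio_sdiff_Iic] at h

end IsKCUltrafilter

def Steered (St : Set Ordinal.{0} → Set Ordinal.{0}) (H : Set Ordinal.{0}) : Prop :=
  ∀ a ⊆ H, a.Finite → ∀ β ∈ H, (∀ γ ∈ a, γ < β) → β ∈ St a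

section Steering

variable {κ : Cardinal.{0}} {U : Set (Set Ordinal.{0})} {St : Set Ordinal.{0} → Set Ordinal.{0}}

def steerSet (κ : Cardinal.{0}) (St : Set Ordinal.{0} → Set Ordinal.{0}) (F : Set Ordinal.{0}) :
    Set Ordinal.{0} :=
  {β | β < κ.ord ∧ (∀ γ ∈ F, γ < β) ∧ ∀ a ⊆ F, a.Finite → β ∈ St a}

theorem IsKCUltrafilter.steerSet_mem (hU : IsKCUltrafilter κ U) (hκ : ℵ₀ ≤ κ)
    (hSt : ∀ a, a.Finite → St a ∈ U) {F : Set Ordinal.{0}} (hF : F ⊆ Iio κ.ord)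
    (hFκ : #F < lift.{1} κ) : steerSet κ St F ∈ U := by
  have hsteer : steerSet κ St F =
      Iio κ.ord ∩ ⋂₀ ((fun γ => Ioo γ κ.ord) '' F ∪ St '' {a | a ⊆ F ∧ a.Finite}) := by
    ext β
    simp only [steerSet, sInter_union, sInter_image, mem_inter_iff, mem_iInter₂, mem_Ioo,
      mem_Iio, mem_ofPred_eq]
    grind
  have hκ' : ℵ₀ ≤ lift.{1} κ := aleph0_le_lift.2 hκ
  rw [hsteer]
  refine hU.inter_sInter_mem ((mk_union_le _ _).trans_lt (add_lt_of_lt hκ' ?_ ?_)) ?_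
  · exact mk_image_le.trans_lt hFκ
  · exact mk_image_le.trans_lt (mk_finite_subsets_lt hκ' hFκ)
  · rintro _ (⟨γ, hγ, rfl⟩ | ⟨a, ⟨-, ha⟩, rfl⟩)
    exacts [hU.Ioo_mem hκ (hF hγ), hSt a ha]

noncomputable def steeredSeq (κ : Cardinal.{0}) (St : Set Ordinal.{0} → Set Ordinal.{0}) :
    Ordinal.{0} → Ordinal.{0} :=
  WellFoundedLT.fix fun ξ rec => sInf (steerSet κ St (range fun η : Iio ξ => rec η η.2))

theorem steeredSeq_eq (ξ : Ordinal.{0}) :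
    steeredSeq κ St ξ = sInf (steerSet κ St (steeredSeq κ St '' Iio ξ)) := by
  rw [image_eq_range]
  exact WellFoundedLT.fix_eq _ ξ

theorem IsKCUltrafilter.steeredSeq_mem (hU : IsKCUltrafilter κ U) (hκ : ℵ₀ ≤ κ)
    (hSt : ∀ a, a.Finite → St a ∈ U) {ξ : Ordinal.{0}} (hξ : ξ < κ.ord) :
    steeredSeq κ St ξ ∈ steerSet κ St (steeredSeq κ St '' Iio ξ) := by
  induction ξ using WellFoundedLT.induction with
  | ind ξ IH =>
    have hsub : steeredSeq κ St '' Iio ξ ⊆ Iio κ.ord := by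
      rintro _ ⟨η, hη, rfl⟩
      exact (IH η hη (lt_trans hη hξ)).1
    have hcard : #(steeredSeq κ St '' Iio ξ) < lift.{1} κ := by
      refine mk_image_le.trans_lt ?_
      rwa [mk_Iio_ordinal, lift_lt, ← lt_ord]
    rw [steeredSeq_eq]
    exact csInf_mem (hU.nonempty_of_mem (hU.steerSet_mem hκ hSt hsub hcard))

theorem IsKCUltrafilter.exists_steered (hU : IsKCUltrafilter κ U) (hκ : ℵ₀ ≤ κ)
    (hSt : ∀ a, a.Finite → St a ∈ U) : ∃ H ∈ bigSets κ, Steered St H := by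
  set f := steeredSeq κ St
  have hmem : ∀ ξ < κ.ord, f ξ ∈ steerSet κ St (f '' Iio ξ) := fun ξ hξ =>
    hU.steeredSeq_mem hκ hSt hξ
  have hmono : StrictMonoOn f (Iio κ.ord) := fun η _ ξ hξ hηξ =>
    (hmem ξ hξ).2.1 _ ⟨η, hηξ, rfl⟩
  refine ⟨f '' Iio κ.ord, ⟨?_, ?_⟩, ?_⟩
  · rintro _ ⟨ξ, hξ, rfl⟩
    exact (hmem ξ hξ).1
  · rw [mk_image_eq_of_injOn _ _ hmono.injOn, mk_Iio_ordinal, card_ord]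
  · rintro a ha hfin _ ⟨ξ, hξ, rfl⟩ hbelow
    refine (hmem ξ hξ).2.2 a (fun γ hγ => ?_) hfin
    obtain ⟨η, hη, rfl⟩ := ha hγ
    exact ⟨η, (hmono.lt_iff_lt hη hξ).1 (hbelow _ hγ), rfl⟩

end Steering

def endExtensions (κ : Cardinal.{0}) (S : Set (Set Ordinal.{0})) (a : Set Ordinal.{0}) :
    Set Ordinal.{0} :=
  {β | β < κ.ord ∧ (∀ γ ∈ a, γ < β) ∧ insert β a ∈ S}

section Secured

variable {κ : Cardinal.{0}} {U G : Set (Set Ordinal.{0})}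

noncomputable def securedAt (κ : Cardinal.{0}) (U G : Set (Set Ordinal.{0})) :
    Ordinal.{0} → Set (Set Ordinal.{0}) :=
  WellFoundedLT.fix fun ρ rec => G ∪ {a | endExtensions κ (⋃ ρ' : Iio ρ, rec ρ' ρ'.2) a ∈ U}

theorem securedAt_eq (ρ : Ordinal.{0}) :
    securedAt κ U G ρ = G ∪ {a | endExtensions κ (⋃ ρ' < ρ, securedAt κ U G ρ') a ∈ U} := by
  rw [securedAt, WellFoundedLT.fix_eq, iUnion_subtype]
  rfl

def Secured (κ : Cardinal.{0}) (U G : Set (Set Ordinal.{0})) : Set (Set Ordinal.{0}) :=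
  ⋃ ρ, securedAt κ U G ρ

noncomputable def securedRank (κ : Cardinal.{0}) (U G : Set (Set Ordinal.{0}))
    (a : Set Ordinal.{0}) : Ordinal.{0} :=
  sInf {ρ | a ∈ securedAt κ U G ρ}

theorem mem_securedAt_securedRank {a : Set Ordinal.{0}} (ha : a ∈ Secured κ U G) :
    a ∈ securedAt κ U G (securedRank κ U G a) :=
  csInf_mem (mem_iUnion.1 ha)

theorem securedRank_le {a : Set Ordinal.{0}} {ρ : Ordinal.{0}} (ha : a ∈ securedAt κ U G ρ) :
    securedRank κ U G a ≤ ρ :=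
  csInf_le' ha

theorem subset_secured : G ⊆ Secured κ U G :=
  fun a ha => mem_iUnion.2 ⟨0, by rw [securedAt_eq]; exact Or.inl ha⟩

theorem IsKCUltrafilter.mem_secured_of_endExtensions_mem (hU : IsKCUltrafilter κ U)
    {a : Set Ordinal.{0}} (ha : endExtensions κ (Secured κ U G) a ∈ U) : a ∈ Secured κ U G := by
  set E := endExtensions κ (Secured κ U G) a
  have : Small.{0} E := small_subset (s := Iio κ.ord) fun β hβ => hβ.1
  set r : E → Ordinal.{0} := fun β => securedRank κ U G (insert ↑β a)
  refine mem_iUnion.2 ⟨(⨆ β, r β) + 1, ?_⟩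
  rw [securedAt_eq]
  refine Or.inr (hU.mem_of_superset ha (fun β hβ => ⟨hβ.1, hβ.2.1, ?_⟩) fun β hβ => hβ.1)
  refine mem_iUnion₂.2 ⟨securedRank κ U G (insert β a), ?_, mem_securedAt_securedRank hβ.2.2⟩
  exact Order.lt_add_one_iff.2 (Ordinal.le_iSup r ⟨β, hβ⟩)

end Secured

def matching (Q : Set (Set Ordinal.{0} × Set Ordinal.{0})) : Set (Set Ordinal.{0}) :=
  {a | ∃ p ∈ Q, Matches a p.1 p.2}

section Patterns

variable {κ : Cardinal.{0}} {U : Set (Set Ordinal.{0})} {Q : Set (Set Ordinal.{0} × Set Ordinal.{0})}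

open Classical in
noncomputable def steering (κ : Cardinal.{0}) (U : Set (Set Ordinal.{0}))
    (Q : Set (Set Ordinal.{0} × Set Ordinal.{0})) (a : Set Ordinal.{0}) : Set Ordinal.{0} :=
  if h : a ∈ matching Q then Iio κ.ord \ h.choose.2
  else if a ∈ Secured κ U (matching Q) then
    endExtensions κ (⋃ ρ < securedRank κ U (matching Q) a, securedAt κ U (matching Q) ρ) a
  else Iio κ.ord \ endExtensions κ (Secured κ U (matching Q)) a

theorem IsKCUltrafilter.steering_mem (hU : IsKCUltrafilter κ U)
    (hQ : ∀ p ∈ Q, p.2 ⊆ Iio κ.ord ∧ p.2 ∉ U) (a : Set Ordinal.{0}) :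
    steering κ U Q a ∈ U := by
  unfold steering
  split_ifs with hm hs
  · exact hU.diff_mem_of_notMem (hQ _ hm.choose_spec.1).1 (hQ _ hm.choose_spec.1).2
  · have := mem_securedAt_securedRank hs
    rw [securedAt_eq] at this
    exact this.resolve_left hm
  · exact hU.diff_mem_of_notMem (fun β hβ => hβ.1)
      fun h => hs (hU.mem_secured_of_endExtensions_mem h)

variable {H : Set Ordinal.{0}}

theorem Steered.notMem_secured (hH : Steered (steering κ U Q) H)
    (hempty : ∅ ∉ Secured κ U (matching Q)) {a : Set Ordinal.{0}} (haH : a ⊆ H) (ha : a.Finite) :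
    a ∉ Secured κ U (matching Q) := by
  classical
  lift a to Finset Ordinal.{0} using ha
  induction a using Finset.induction_on_max with
  | empty => simpa using hempty
  | insert b t hbt IH =>
    rw [Finset.coe_insert] at haH ⊢
    have htH := (subset_insert b _).trans haH
    have ht := IH htH
    have hb := hH _ htH t.finite_toSet b (haH (mem_insert b _)) hbt
    rw [steering, dif_neg fun hm => ht (subset_secured hm), if_neg ht] at hb
    exact fun hsec => hb.2 ⟨hb.1, hbt, hsec⟩

theorem Steered.mem_matching (hH : Steered (steering κ U Q) H) {X : Set Ordinal.{0}}
    (hXH : X ⊆ H) (hX : X.Infinite) {a : Set Ordinal.{0}} (ha : a ∈ Secured κ U (matching Q))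
    (haX : a ⊆ X) (hfin : a.Finite) (habove : ∀ β ∈ X \ a, ∀ γ ∈ a, γ < β) :
    X ∈ matching Q := by
  induction hρ : securedRank κ U (matching Q) a using WellFoundedLT.induction generalizing a with
  | ind ρ IH =>
  by_cases hm : a ∈ matching Q
  · obtain ⟨hpQ, hpa, hpa'⟩ := hm.choose_spec
    refine ⟨hm.choose, hpQ, hpa.trans haX, eq_empty_of_forall_notMem fun x ⟨hxp, hxX⟩ => ?_⟩
    by_cases hxa : x ∈ a
    · exact eq_empty_iff_forall_notMem.1 hpa' x ⟨hxp, hxa⟩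
    · have hx := hH a (haX.trans hXH) hfin x (hXH hxX) (habove x ⟨hxX, hxa⟩)
      rw [steering, dif_pos hm] at hx
      exact hx.2 hxp
  · have hβ₀ : sInf (X \ a) ∈ X \ a := csInf_mem (hX.sdiff hfin).nonempty
    set β₀ := sInf (X \ a)
    have hext := hH a (haX.trans hXH) hfin β₀ (hXH hβ₀.1) (habove β₀ hβ₀)
    rw [steering, dif_neg hm, if_pos ha, hρ] at hext
    obtain ⟨ρ', hρ', hsec⟩ := mem_iUnion₂.1 hext.2.2
    refine IH _ ((securedRank_le hsec).trans_lt hρ') (mem_iUnion.2 ⟨ρ', hsec⟩)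
      (insert_subset hβ₀.1 haX) (hfin.insert β₀) ?_ rfl
    rintro β ⟨hβX, hβa⟩ γ hγ
    have hβ : β ∈ X \ a := ⟨hβX, fun h => hβa (mem_insert_of_mem _ h)⟩
    rcases eq_or_mem_of_mem_insert hγ with rfl | hγa
    · exact (csInf_le' hβ).lt_of_ne fun h => hβa (h ▸ mem_insert _ _)
    · exact habove β hβ γ hγa

end Patterns

/-- Let `κ` be uncountable and `𝒰` a `κ`-complete
nonprincipal ultrafilter on `κ` (not assumed normal).  Then every set in
`Σ([κ]^{<ω}, 𝒫(κ) - 𝒰)` is Ramsey. -/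
theorem statement13 (κ : Cardinal.{0}) (hκ : ℵ₀ < κ)
    (U : Set (Set Ordinal.{0})) (hU : IsKCUltrafilter κ U) :
    ∀ S ∈ SigmaFam κ (finSets κ) {B | B ⊆ Set.Iio κ.ord ∧ B ∉ U},
      IsRamsey κ S := by
  rintro S ⟨Q, hQ, rfl⟩
  obtain ⟨H, hHκ, hH⟩ :=
    hU.exists_steered hκ.le fun a _ => hU.steering_mem (fun p hp => (hQ p hp).2.1) a
  refine ⟨H, hHκ, ?_⟩
  by_cases hempty : ∅ ∈ Secured κ U (matching Q)
  · refine Or.inl fun X ⟨hXH, hXκ⟩ => ⟨⟨hXH.trans hHκ.1, hXκ⟩, ?_⟩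
    have hX : X.Infinite :=
      infinite_coe_iff.1 (infinite_iff.2 (hXκ ▸ aleph0_le_lift.2 hκ.le))
    exact hH.mem_matching hXH hX hempty (empty_subset X) finite_empty (by simp)
  · refine Or.inr (eq_empty_of_forall_notMem fun X ⟨⟨hXH, _⟩, _, p, hpQ, hpX, _⟩ => ?_)
    obtain ⟨⟨-, hp₁⟩, -, hdisj⟩ := hQ p hpQ
    exact hH.notMem_secured hempty (hpX.trans hXH) hp₁
      (subset_secured ⟨p, hpQ, subset_rfl, hdisj.symm.inter_eq⟩)
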